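/- Let S be a metric space, ν a Borel probability measure on S, and µ = ν^{⊗ℕ} the infinite product measure on S^ℕ (the distribution of an iid process). Fix r ≥ 0 and set α = (ν×ν){(u,v) : ρ(u,v) ≤ r}. Then for all integers m, k ≥ 1: c^m_k(r) = α^{m+k−1}; if α > 0 then det^m_k(r) = α^{k−1}·(k − (k − 1)·α); and if 0 < α < 1 then lavg^m_k(r) = k + α/(1 − α). In particular det^m_k(r) and lavg^m_k(r) do not depend on the embedding dimension m. -/

import Mathlib

open Filter Topology MeasureTheory

/-- `dmax h x y = max_{0 ≤ l < h} dist (x l) (y l)` (equals 0 if `h = 0`). -/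
noncomputable def dmax {S : Type*} [MetricSpace S] (h : ℕ) (x y : ℕ → S) : ℝ :=
  (((Finset.range h).sup fun l => nndist (x l) (y l) : NNReal) : ℝ)

/-- The correlation integral `c^m_k(r) = (µ×µ){(x,y) : d^m_k(x,y) ≤ r}`,
where `d^m_k = dmax (m + k - 1)` (the Chebyshev embedding metric). -/
noncomputable def cInt {S : Type*} [MetricSpace S] [MeasurableSpace S]
    (μ : Measure (ℕ → S)) (m k : ℕ) (r : ℝ) : ℝ :=
  ((μ.prod μ) {p : (ℕ → S) × (ℕ → S) | dmax (m + k - 1) p.1 p.2 ≤ r}).toReal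

/-- The recurrence integral `rr^m_k(r) = k·c^m_k(r) − (k − 1)·c^m_{k+1}(r)`. -/
noncomputable def rrInt {S : Type*} [MetricSpace S] [MeasurableSpace S]
    (μ : Measure (ℕ → S)) (m k : ℕ) (r : ℝ) : ℝ :=
  (k : ℝ) * cInt μ m k r - ((k : ℝ) - 1) * cInt μ m (k + 1) r

/-- The asymptotic determinism `det^m_k(r) = rr^m_k(r)/rr^m_1(r)`. -/
noncomputable def detInt {S : Type*} [MetricSpace S] [MeasurableSpace S]
    (μ : Measure (ℕ → S)) (m k : ℕ) (r : ℝ) : ℝ :=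
  rrInt μ m k r / rrInt μ m 1 r

/-- The mean diagonal line length
`lavg^m_k(r) = k + c^m_{k+1}(r)/(c^m_k(r) − c^m_{k+1}(r))`. -/
noncomputable def lavgInt {S : Type*} [MetricSpace S] [MeasurableSpace S]
    (μ : Measure (ℕ → S)) (m k : ℕ) (r : ℝ) : ℝ :=
  (k : ℝ) + cInt μ m (k + 1) r / (cInt μ m k r - cInt μ m (k + 1) r)

/-! Pairing two independent `ν`-iid sequences termwise gives a `ν ⊗ ν`-iid sequence, and
`d^m_k(x, y) ≤ r` says that its first `m + k - 1` terms lie in `A = {(u, v) | dist u v ≤ r}`; hence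
`c^m_k(r) = α^{m+k-1}`, and `det` and `lavg` are explicit functions of `α`. As `S` is not assumed
separable, `A` need not be measurable for the product σ-algebra of `S × S`; the cylinder over `A`
is measured by splitting off the first coordinates, which are independent of the rest, so that
the measure becomes a product measure of a product set. -/

open ProbabilityTheory Set

namespace MeasureTheory.Measure

variable {ι : Type*} {X : ι → Type*} [∀ i, MeasurableSpace (X i)]
  (μ : ∀ i, Measure (X i)) [∀ i, IsProbabilityMeasure (μ i)]

theorem indepFun_subtype_restrict_infinitePi (p : ι → Prop) :
    IndepFun (fun x (i : {i // p i}) => x i) (fun x (i : {i // ¬ p i}) => x i)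
      (infinitePi μ) := by
  have hcoord := iIndepFun_infinitePi (P := μ) (X := fun _ x => x) (fun _ => measurable_id)
  rw [iIndepFun_iff_iIndep] at hcoord
  have h := indep_biSup_compl (fun i => (measurable_pi_apply i).comap_le) hcoord {i | p i}
  rw [IndepFun_iff_Indep]
  refine indep_of_indep_of_le_left (indep_of_indep_of_le_right h ?_) ?_
  all_goals
    simp only [MeasurableSpace.pi, MeasurableSpace.comap_iSup, MeasurableSpace.comap_comp,
      Function.comp_def]
    exact iSup_le fun i => le_iSup₂_of_le (i : ι) i.2 le_rfl

theorem infinitePi_pi_finset (s : Finset ι) (t : ∀ i, Set (X i)) :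
    infinitePi μ ((s : Set ι).pi t) = ∏ i ∈ s, μ i (t i) := by
  classical
  let e := MeasurableEquiv.piEquivPiSubtypeProd X (· ∈ s)
  have hrest : Measurable fun (x : ∀ i, X i) (i : {i // i ∉ s}) => x i :=
    measurable_pi_lambda _ fun _ => measurable_pi_apply _
  have : IsProbabilityMeasure ((infinitePi μ).map fun x (i : {i // i ∉ s}) => x i) :=
    isProbabilityMeasure_map hrest.aemeasurable
  have hmap : (infinitePi μ).map e = (Measure.pi fun i : s => μ i).prod
      ((infinitePi μ).map fun x (i : {i // i ∉ s}) => x i) := by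
    rw [← infinitePi_map_restrict]
    exact (indepFun_subtype_restrict_infinitePi μ (· ∈ s)).map_prod_eq_prod_map_map
      (measurable_restrict _).aemeasurable hrest.aemeasurable
  have hset : (s : Set ι).pi t = e ⁻¹' ((univ.pi fun i : s => t i) ×ˢ univ) := by
    ext x
    simp [e]
  rw [hset, ← e.map_apply, hmap, prod_prod, pi_pi, measure_univ, mul_one,
    Finset.prod_coe_sort s fun i => μ i (t i)]

end MeasureTheory.Measure

section FiniteMarginals

variable {T U : Type*} [MeasurableSpace T] [MeasurableSpace U]

theorem eq_infinitePi_of_map_fin_eq_pi {P : Measure (ℕ → T)} {ρ : Measure T}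
    [IsProbabilityMeasure ρ]
    (hP : ∀ n : ℕ, P.map (fun x (i : Fin n) => x i) = Measure.pi fun _ => ρ) :
    P = Measure.infinitePi fun _ => ρ := by
  classical
  refine Measure.eq_infinitePi _ fun s t ht => ?_
  obtain ⟨n, hsn⟩ := s.exists_nat_subset_range
  have hset : (s : Set ℕ).pi t = (fun x (i : Fin n) => x i) ⁻¹'
      univ.pi fun i : Fin n => if (i : ℕ) ∈ s then t i else univ := by
    ext x
    simp only [Set.mem_pi, mem_preimage, Finset.mem_coe, mem_univ, true_implies]
    refine ⟨fun h i => ?_, fun h i hi => ?_⟩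
    · split_ifs with hi
      exacts [h i hi, mem_univ _]
    · simpa [hi] using h ⟨i, Finset.mem_range.1 (hsn hi)⟩
  have hproj : Measurable fun (x : ℕ → T) (i : Fin n) => x i := by fun_prop
  rw [hset, ← Measure.map_apply hproj
    (.univ_pi fun i => by split_ifs; exacts [ht _, .univ]), hP, Measure.pi_pi,
    Fin.prod_univ_eq_prod_range (fun i => ρ (if i ∈ s then t i else univ))]
  simp only [apply_ite, measure_univ]
  rw [Finset.prod_ite_mem, Finset.inter_eq_right.2 hsn]

theorem prod_map_arrowProdEquivProdArrow_symm_eq_infinitePi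
    {P : Measure (ℕ → T)} {Q : Measure (ℕ → U)} [SFinite P] [SFinite Q]
    {ρ : Measure T} {σ : Measure U} [IsProbabilityMeasure ρ] [IsProbabilityMeasure σ]
    (hP : ∀ n : ℕ, P.map (fun x (i : Fin n) => x i) = Measure.pi fun _ => ρ)
    (hQ : ∀ n : ℕ, Q.map (fun x (i : Fin n) => x i) = Measure.pi fun _ => σ) :
    (P.prod Q).map (MeasurableEquiv.arrowProdEquivProdArrow T U ℕ).symm =
      Measure.infinitePi fun _ => ρ.prod σ := by
  refine eq_infinitePi_of_map_fin_eq_pi fun n => ?_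
  have hT : Measurable fun (x : ℕ → T) (i : Fin n) => x i := by fun_prop
  have hU : Measurable fun (x : ℕ → U) (i : Fin n) => x i := by fun_prop
  have hTU : Measurable fun (x : ℕ → T × U) (i : Fin n) => x i := by fun_prop
  have hcomm : (fun x (i : Fin n) => x i) ∘ (MeasurableEquiv.arrowProdEquivProdArrow T U ℕ).symm =
      (MeasurableEquiv.arrowProdEquivProdArrow T U (Fin n)).symm ∘
        Prod.map (fun x (i : Fin n) => x i) (fun x (i : Fin n) => x i) := rfl
  rw [Measure.map_map hTU (MeasurableEquiv.measurable _), hcomm,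
    ← Measure.map_map (MeasurableEquiv.measurable _) (hT.prodMap hU),
    ← Measure.map_prod_map _ _ hT hU, hP, hQ,
    ((measurePreserving_arrowProdEquivProdArrow T U (Fin n) _ _).symm _).map_eq]

end FiniteMarginals

theorem dmax_le_iff {S : Type*} [MetricSpace S] {h : ℕ} {x y : ℕ → S} {r : ℝ} (hr : 0 ≤ r) :
    dmax h x y ≤ r ↔ ∀ i < h, dist (x i) (y i) ≤ r := by
  rw [dmax, ← Real.coe_toNNReal r hr, NNReal.coe_le_coe, Finset.sup_le_iff]
  simp only [Finset.mem_range, ← NNReal.coe_le_coe, coe_nndist, Real.coe_toNNReal r hr]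

section Correlation

variable {S : Type*} [MetricSpace S] [MeasurableSpace S]

variable {ν : Measure S} [IsProbabilityMeasure ν] {μ : Measure (ℕ → S)} [SFinite μ]

theorem measure_prod_dmax_le_eq_pow
    (hiid : ∀ n : ℕ, μ.map (fun x (i : Fin n) => x i) = Measure.pi fun _ => ν)
    {r : ℝ} (hr : 0 ≤ r) (h : ℕ) :
    (μ.prod μ) {p : (ℕ → S) × (ℕ → S) | dmax h p.1 p.2 ≤ r} =
      (ν.prod ν) {p : S × S | dist p.1 p.2 ≤ r} ^ h := by
  let e := (MeasurableEquiv.arrowProdEquivProdArrow S S ℕ).symm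
  have hset : {p : (ℕ → S) × (ℕ → S) | dmax h p.1 p.2 ≤ r} =
      e ⁻¹' (Finset.range h : Set ℕ).pi fun _ => {p : S × S | dist p.1 p.2 ≤ r} := by
    ext p
    simp only [mem_ofPred_eq, mem_preimage, Set.mem_pi, Finset.coe_range, mem_Iio, dmax_le_iff hr]
    rfl
  rw [hset, ← e.map_apply, prod_map_arrowProdEquivProdArrow_symm_eq_infinitePi hiid hiid,
    Measure.infinitePi_pi_finset, Finset.prod_const, Finset.card_range]

theorem cInt_eq_pow
    (hiid : ∀ n : ℕ, μ.map (fun x (i : Fin n) => x i) = Measure.pi fun _ => ν)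
    {r : ℝ} (hr : 0 ≤ r) (m k : ℕ) :
    cInt μ m k r = ((ν.prod ν) {p : S × S | dist p.1 p.2 ≤ r}).toReal ^ (m + k - 1) := by
  rw [cInt, measure_prod_dmax_le_eq_pow hiid hr, ENNReal.toReal_pow]

end Correlation

section Recurrence

variable {S : Type*} [MetricSpace S] [MeasurableSpace S] {μ : Measure (ℕ → S)} {m : ℕ} {r a : ℝ}

theorem detInt_eq_of_cInt_eq_pow (ha : a ≠ 0) (hc : ∀ k, cInt μ m k r = a ^ (m + k - 1))
    (hm : 1 ≤ m) {k : ℕ} (hk : 1 ≤ k) :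
    detInt μ m k r = a ^ (k - 1) * (k - (k - 1) * a) := by
  obtain ⟨m, rfl⟩ := Nat.exists_eq_add_of_le' hm
  obtain ⟨k, rfl⟩ := Nat.exists_eq_add_of_le' hk
  simp only [detInt, rrInt, hc, Nat.add_sub_cancel, ← add_assoc]
  push_cast
  field_simp
  ring

theorem lavgInt_eq_of_cInt_eq_pow (hc : ∀ k, cInt μ m k r = a ^ (m + k - 1)) (hm : 1 ≤ m)
    (k : ℕ) : lavgInt μ m k r = k + a / (1 - a) := by
  obtain ⟨m, rfl⟩ := Nat.exists_eq_add_of_le' hm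
  simp only [lavgInt, hc, Nat.add_sub_cancel, ← add_assoc, add_right_comm m 1 k, pow_succ]
  rcases eq_or_ne a 0 with rfl | ha
  · simp
  · rw [← mul_one_sub, mul_div_mul_left _ _ (pow_ne_zero _ ha)]

end Recurrence

theorem iid_asymptotics_general {S : Type*} [MetricSpace S] [MeasurableSpace S]
    (ν : Measure S) [IsProbabilityMeasure ν]
    (μ : Measure (ℕ → S)) [IsProbabilityMeasure μ]
    (hiid : ∀ n : ℕ, μ.map (fun x (i : Fin n) => x (i : ℕ)) =
      Measure.pi fun _ : Fin n => ν)
    (r : ℝ) (hr : 0 ≤ r) :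
    ∀ m k : ℕ, 1 ≤ m → 1 ≤ k →
      cInt μ m k r = (((ν.prod ν) {p : S × S | dist p.1 p.2 ≤ r}).toReal) ^ (m + k - 1) ∧
      (0 < ((ν.prod ν) {p : S × S | dist p.1 p.2 ≤ r}).toReal →
        detInt μ m k r =
          (((ν.prod ν) {p : S × S | dist p.1 p.2 ≤ r}).toReal) ^ (k - 1) *
            ((k : ℝ) - ((k : ℝ) - 1) *
              ((ν.prod ν) {p : S × S | dist p.1 p.2 ≤ r}).toReal)) ∧
      (0 < ((ν.prod ν) {p : S × S | dist p.1 p.2 ≤ r}).toReal →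
        ((ν.prod ν) {p : S × S | dist p.1 p.2 ≤ r}).toReal < 1 →
        lavgInt μ m k r =
          (k : ℝ) + ((ν.prod ν) {p : S × S | dist p.1 p.2 ≤ r}).toReal /
            (1 - ((ν.prod ν) {p : S × S | dist p.1 p.2 ≤ r}).toReal)) := by
  intro m k hm hk
  have hc := cInt_eq_pow hiid hr m
  exact ⟨hc k, fun hα => detInt_eq_of_cInt_eq_pow hα.ne' hc hm hk,
    fun _ _ => lavgInt_eq_of_cInt_eq_pow hc hm k⟩

/-- Let `S` be a metric space, `ν` a Borel probability measure on `S`,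
and `µ` the infinite product measure `ν^{⊗ℕ}` on `S^ℕ` (characterized by its
finite-dimensional marginals being the finite products `ν^{⊗n}`). Fix `r ≥ 0` and set
`α = (ν×ν){(u,v) : ρ(u,v) ≤ r}`. Then for all integers `m, k ≥ 1`:
`c^m_k(r) = α^{m+k−1}`; if `α > 0` then `det^m_k(r) = α^{k−1}·(k − (k − 1)·α)`; and if
`0 < α < 1` then `lavg^m_k(r) = k + α/(1 − α)`. In particular `det^m_k(r)` and
`lavg^m_k(r)` do not depend on the embedding dimension `m`. -/
theorem iid_asymptotics {S : Type*} [MetricSpace S] [MeasurableSpace S] [BorelSpace S]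
    (ν : Measure S) [IsProbabilityMeasure ν]
    (μ : Measure (ℕ → S)) [IsProbabilityMeasure μ]
    (hiid : ∀ n : ℕ, μ.map (fun x (i : Fin n) => x (i : ℕ)) =
      Measure.pi fun _ : Fin n => ν)
    (r : ℝ) (hr : 0 ≤ r) :
    ∀ m k : ℕ, 1 ≤ m → 1 ≤ k →
      cInt μ m k r = (((ν.prod ν) {p : S × S | dist p.1 p.2 ≤ r}).toReal) ^ (m + k - 1) ∧
      (0 < ((ν.prod ν) {p : S × S | dist p.1 p.2 ≤ r}).toReal →
        detInt μ m k r =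
          (((ν.prod ν) {p : S × S | dist p.1 p.2 ≤ r}).toReal) ^ (k - 1) *
            ((k : ℝ) - ((k : ℝ) - 1) *
              ((ν.prod ν) {p : S × S | dist p.1 p.2 ≤ r}).toReal)) ∧
      (0 < ((ν.prod ν) {p : S × S | dist p.1 p.2 ≤ r}).toReal →
        ((ν.prod ν) {p : S × S | dist p.1 p.2 ≤ r}).toReal < 1 →
        lavgInt μ m k r =
          (k : ℝ) + ((ν.prod ν) {p : S × S | dist p.1 p.2 ≤ r}).toReal /
            (1 - ((ν.prod ν) {p : S × S | dist p.1 p.2 ≤ r}).toReal)) :=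
  iid_asymptotics_general ν μ hiid r hr
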